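/- Strong joint concavity of fidelity (Theorem 1): Let d ≥ 1 and n ≥ 1. Let (ρ_i)_{i=1}^n and (σ_i)_{i=1}^n be density matrices on ℂ^d, and let (p_i)_{i=1}^n and (q_i)_{i=1}^n be probability distributions (p_i, q_i ≥ 0, ∑_i p_i = 1, ∑_i q_i = 1). Then F(∑_i p_i ρ_i, ∑_i q_i σ_i) ≥ ∑_i √(p_i q_i) · F(ρ_i, σ_i). -/

import Mathlib

/-!
The proof goes through Alberti's variational formula: for positive semidefinite `P`, `Q`,
`2 F(P, Q) = inf_{Z > 0} (tr (P Z⁻¹) + tr (Q Z))`. The bound `≤`, rescaled by AM-GM, reads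
`2 √(p q) F(ρ, σ) ≤ p tr (ρ Z⁻¹) + q tr (σ Z)`; summing it over `i` with one common `Z` gives, by
linearity of the trace, `tr (P Z⁻¹) + tr (Q Z)` for the mixtures `P`, `Q`, and the infimum of that
is `2 F(P, Q)`.

Both halves are proved with regularized inverses instead of polar decompositions or inverses of
singular matrices. Writing `M = √(√ρ σ √ρ)`, the contraction `C = (M + δ)⁻¹ √ρ √σ` satisfies
`tr (C √σ √ρ) = tr ((M + δ)⁻¹ M²) ≥ tr M - δ d`, and Cauchy-Schwarz for the Hilbert-Schmidt inner
product splits `tr (C √σ √ρ)` into `tr (ρ Z⁻¹)` and `tr (σ Z)`. Conversely the infimum is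
approached at `Z = (√P + η) (B + t)⁻¹ (√P + η)` with `B = √(√P Q √P)`, letting first `η` and then
`t` tend to `0`.
-/

open Matrix
open scoped ComplexOrder

/-- The unique positive semidefinite square root of a positive semidefinite matrix
(junk value `0` if the matrix is not positive semidefinite). -/
noncomputable def msqrt {d : ℕ} (A : Matrix (Fin d) (Fin d) ℂ) : Matrix (Fin d) (Fin d) ℂ :=
  open scoped Classical in
  if h : A.PosSemidef then
    h.1.eigenvectorUnitary.1 * diagonal ((↑) ∘ (√·) ∘ h.1.eigenvalues) *
      (star h.1.eigenvectorUnitary : Matrix (Fin d) (Fin d) ℂ)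
  else 0

/-- The fidelity F(ρ,σ) = tr √(√ρ · σ · √ρ), as a real number. -/
noncomputable def fid {d : ℕ} (ρ σ : Matrix (Fin d) (Fin d) ℂ) : ℝ :=
  ((msqrt (msqrt ρ * σ * msqrt ρ)).trace).re

open Filter Topology
open scoped MatrixOrder

namespace Matrix

section Trace

variable {m n : Type*} [Fintype m] [Fintype n]

lemma PosSemidef.re_trace_nonneg {A : Matrix n n ℂ} (hA : A.PosSemidef) : 0 ≤ A.trace.re :=
  (Complex.nonneg_iff.mp hA.trace_nonneg).1

lemma re_trace_le_re_trace_of_le {A B : Matrix n n ℂ} (hAB : A ≤ B) :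
    A.trace.re ≤ B.trace.re := by
  simpa [trace_sub] using (le_iff.mp hAB).re_trace_nonneg

lemma two_mul_re_trace_conjTranspose_mul_le (U V : Matrix m n ℂ) :
    2 * (Uᴴ * V).trace.re ≤ (Uᴴ * U).trace.re + (Vᴴ * V).trace.re := by
  have hVU : (Vᴴ * U).trace.re = (Uᴴ * V).trace.re := by
    rw [← conjTranspose_conjTranspose U, ← conjTranspose_mul, trace_conjTranspose,
      conjTranspose_conjTranspose, Complex.star_def, Complex.conj_re]
  have := (posSemidef_conjTranspose_mul_self (U - V)).re_trace_nonneg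
  simp only [conjTranspose_sub, Matrix.sub_mul, Matrix.mul_sub, trace_sub, Complex.sub_re] at this
  linarith

variable [DecidableEq n]

lemma posSemidef_sqrt (A : Matrix n n ℂ) : (CFC.sqrt A).PosSemidef :=
  (CFC.sqrt_nonneg A).posSemidef

lemma PosSemidef.sqrt_mul_mul_sqrt (A : Matrix n n ℂ) {B : Matrix n n ℂ} (hB : B.PosSemidef) :
    (CFC.sqrt A * B * CFC.sqrt A).PosSemidef := by
  simpa [(posSemidef_sqrt A).isHermitian.eq] using hB.conjTranspose_mul_mul_same (CFC.sqrt A)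

lemma PosSemidef.re_trace_mul_nonneg {A B : Matrix n n ℂ} (hA : A.PosSemidef)
    (hB : B.PosSemidef) : 0 ≤ (A * B).trace.re := by
  rw [← CFC.sqrt_mul_sqrt_self A hA.nonneg, Matrix.mul_assoc, trace_mul_comm]
  exact (hB.sqrt_mul_mul_sqrt A).re_trace_nonneg

lemma re_trace_mul_le_of_le {A B C : Matrix n n ℂ} (hAB : A ≤ B) (hC : C.PosSemidef) :
    (A * C).trace.re ≤ (B * C).trace.re := by
  have := (le_iff.mp hAB).re_trace_mul_nonneg hC
  rwa [Matrix.sub_mul, trace_sub, Complex.sub_re, sub_nonneg] at this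

/-- Cauchy-Schwarz for the Hilbert-Schmidt pairing of `a Cᴴ Aᴴ Z^(-1/2)` and `b B Z^(1/2)`;
the contraction `C` is then dropped from the first norm. -/
lemma two_mul_re_trace_le_of_mul_conjTranspose_le_one {A B C Z : Matrix n n ℂ}
    (hC : C * Cᴴ ≤ 1) (hZ : Z.PosDef) (a b : ℝ) :
    2 * (a * b) * (C * B * A).trace.re ≤
      a ^ 2 * (A * Aᴴ * Z⁻¹).trace.re + b ^ 2 * (Bᴴ * B * Z).trace.re := by
  set G := CFC.sqrt Z
  have hGG : G * G = Z := CFC.sqrt_mul_sqrt_self Z hZ.posSemidef.nonneg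
  have hG : G.IsHermitian := (posSemidef_sqrt Z).isHermitian
  have hGu : IsUnit G := (IsStrictlyPositive.sqrt Z hZ.isStrictlyPositive).isUnit
  have hUV : (G⁻¹ * (A * (C * (B * G)))).trace = (C * B * A).trace := by
    rw [← Matrix.mul_assoc C, ← Matrix.mul_assoc A, ← Matrix.mul_assoc, trace_conj' hGu,
      trace_mul_comm, Matrix.mul_assoc]
  have hUU : (G⁻¹ * (A * (C * (Cᴴ * (Aᴴ * G⁻¹))))).trace.re ≤ (A * Aᴴ * Z⁻¹).trace.re :=
    calc (G⁻¹ * (A * (C * (Cᴴ * (Aᴴ * G⁻¹))))).trace.re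
        = (G⁻¹ * A * (C * Cᴴ) * (G⁻¹ * A)ᴴ).trace.re := by
          rw [conjTranspose_mul, hG.inv.eq]; simp only [Matrix.mul_assoc]
      _ ≤ (G⁻¹ * A * 1 * (G⁻¹ * A)ᴴ).trace.re :=
          re_trace_le_re_trace_of_le (star_right_conjugate_le_conjugate hC _)
      _ = (A * Aᴴ * Z⁻¹).trace.re := by
          rw [conjTranspose_mul, hG.inv.eq, ← hGG, Matrix.mul_inv_rev, Matrix.mul_one,
            Matrix.mul_assoc, trace_mul_comm G⁻¹]
          simp only [Matrix.mul_assoc]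
  have hVV : (G * (Bᴴ * (B * G))).trace = (Bᴴ * B * Z).trace := by
    rw [trace_mul_comm, ← hGG]; simp only [Matrix.mul_assoc]
  have := two_mul_re_trace_conjTranspose_mul_le (a • (Cᴴ * Aᴴ * G⁻¹)) (b • (B * G))
  simp only [conjTranspose_smul, conjTranspose_mul, conjTranspose_conjTranspose, hG.inv.eq,
    hG.eq, star_trivial, smul_mul_smul_comm, trace_smul, Complex.smul_re, smul_eq_mul,
    Matrix.mul_assoc] at this
  rw [hUV, hVV] at this
  nlinarith [mul_le_mul_of_nonneg_left hUU (mul_self_nonneg a)]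

end Trace

section Regularization

variable {n : Type*} [DecidableEq n] {M : Matrix n n ℂ} {δ : ℝ}

lemma PosSemidef.posDef_add_smul_one (hM : M.PosSemidef) (hδ : 0 < δ) : (M + δ • 1).PosDef :=
  PosDef.posSemidef_add hM (PosDef.one.smul hδ)

variable [Fintype n]

lemma inv_add_smul_one_mul (h : IsUnit (M + δ • 1)) :
    (M + δ • 1)⁻¹ * M = 1 - δ • (M + δ • 1)⁻¹ :=
  calc (M + δ • 1)⁻¹ * M = (M + δ • 1)⁻¹ * ((M + δ • 1) - δ • 1) := by rw [add_sub_cancel_right]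
    _ = 1 - δ • (M + δ • 1)⁻¹ := by
      rw [Matrix.mul_sub, Matrix.nonsing_inv_mul _ ((isUnit_iff_isUnit_det _).mp h),
        mul_smul_comm, Matrix.mul_one]

lemma PosSemidef.inv_add_smul_one_mul_sq_mul_inv_le_one (hM : M.PosSemidef) (hδ : 0 < δ) :
    (M + δ • 1)⁻¹ * (M * M) * (M + δ • 1)⁻¹ ≤ 1 := by
  have hMδ := hM.posDef_add_smul_one hδ
  have hdet := (isUnit_iff_isUnit_det _).mp hMδ.isUnit
  have hsq : M * M ≤ (M + δ • 1) * (M + δ • 1) := by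
    have h : (M + δ • 1) * (M + δ • 1) - M * M = (2 * δ) • M + δ ^ 2 • 1 := by
      simp only [Matrix.add_mul, Matrix.mul_add, smul_mul_assoc, mul_smul_comm, Matrix.one_mul,
        Matrix.mul_one]
      module
    rw [le_iff, h]
    exact (hM.smul (by positivity)).add (PosSemidef.one.smul (sq_nonneg δ))
  calc (M + δ • 1)⁻¹ * (M * M) * (M + δ • 1)⁻¹
      ≤ (M + δ • 1)⁻¹ * ((M + δ • 1) * (M + δ • 1)) * (M + δ • 1)⁻¹ :=
        hMδ.inv.isHermitian.isSelfAdjoint.conjugate_le_conjugate hsq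
    _ = 1 := by
        rw [← Matrix.mul_assoc, Matrix.nonsing_inv_mul _ hdet, Matrix.one_mul,
          Matrix.mul_nonsing_inv _ hdet]

lemma re_trace_inv_add_smul_one_mul_sq (h : IsUnit (M + δ • 1)) :
    ((M + δ • 1)⁻¹ * (M * M)).trace.re = M.trace.re - δ * ((M + δ • 1)⁻¹ * M).trace.re := by
  rw [← Matrix.mul_assoc, inv_add_smul_one_mul h, Matrix.sub_mul, Matrix.one_mul, smul_mul_assoc,
    inv_add_smul_one_mul h]
  simp [trace_sub, trace_smul]

lemma PosSemidef.re_trace_inv_add_smul_one_mul_sq_le (hM : M.PosSemidef) (hδ : 0 < δ) :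
    ((M + δ • 1)⁻¹ * (M * M)).trace.re ≤ M.trace.re := by
  have hMδ := hM.posDef_add_smul_one hδ
  rw [re_trace_inv_add_smul_one_mul_sq hMδ.isUnit]
  nlinarith [hMδ.inv.posSemidef.re_trace_mul_nonneg hM]

lemma PosSemidef.sub_le_re_trace_inv_add_smul_one_mul_sq (hM : M.PosSemidef) (hδ : 0 < δ) :
    M.trace.re - δ * Fintype.card n ≤ ((M + δ • 1)⁻¹ * (M * M)).trace.re := by
  have hMδ := hM.posDef_add_smul_one hδ
  rw [re_trace_inv_add_smul_one_mul_sq hMδ.isUnit, inv_add_smul_one_mul hMδ.isUnit]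
  simp only [trace_sub, trace_one, trace_smul, Complex.sub_re, Complex.natCast_re,
    Complex.smul_re, smul_eq_mul]
  nlinarith [mul_nonneg (mul_self_nonneg δ) hMδ.inv.posSemidef.re_trace_nonneg]

end Regularization

section Variational

variable {n : Type*} [Fintype n] [DecidableEq n]

/-- The witness is Alberti's minimizer `√P Y⁻¹ √P` (optimal for `Y = √(√P Q √P)`), with `√P`
shifted by `η` to make it invertible. -/
lemma exists_posDef_re_trace_le_of_posDef {P Q Y : Matrix n n ℂ} (hP : P.PosSemidef)
    (hY : Y.PosDef) {ε : ℝ} (hε : 0 < ε) :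
    ∃ Z : Matrix n n ℂ, Z.PosDef ∧ (P * Z⁻¹).trace.re + (Q * Z).trace.re ≤
      Y.trace.re + (Y⁻¹ * (CFC.sqrt P * Q * CFC.sqrt P)).trace.re + ε := by
  set R := CFC.sqrt P
  have hR := posSemidef_sqrt P
  have hf : ∀ᶠ η in 𝓝[>] (0 : ℝ), (Y⁻¹ * ((R + η • 1) * Q * (R + η • 1))).trace.re <
      (Y⁻¹ * (R * Q * R)).trace.re + ε :=
    nhdsWithin_le_nhds <| (Continuous.tendsto' (by fun_prop) 0 _ (by simp)).eventually
      (gt_mem_nhds (lt_add_of_pos_right _ hε))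
  obtain ⟨η, hfη, hη⟩ := (hf.and self_mem_nhdsWithin).exists
  have hS := hR.posDef_add_smul_one (δ := η) hη
  refine ⟨(R + η • 1) * Y⁻¹ * (R + η • 1), ?_, ?_⟩
  · simpa [hS.isHermitian.eq] using
      hY.inv.conjTranspose_mul_mul_same (mulVec_injective_iff_isUnit.mpr hS.isUnit)
  have hPZ : (P * ((R + η • 1) * Y⁻¹ * (R + η • 1))⁻¹).trace.re ≤ Y.trace.re :=
    calc (P * ((R + η • 1) * Y⁻¹ * (R + η • 1))⁻¹).trace.re
        = ((R + η • 1)⁻¹ * P * (R + η • 1)⁻¹ * Y).trace.re := by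
          rw [Matrix.mul_inv_rev, Matrix.mul_inv_rev,
            nonsing_inv_nonsing_inv _ ((isUnit_iff_isUnit_det _).mp hY.isUnit)]
          simp only [← Matrix.mul_assoc]
          rw [trace_mul_cycle]
          simp only [← Matrix.mul_assoc]
      _ ≤ (1 * Y).trace.re := by
          rw [← CFC.sqrt_mul_sqrt_self P hP.nonneg]
          exact re_trace_mul_le_of_le (hR.inv_add_smul_one_mul_sq_mul_inv_le_one hη) hY.posSemidef
      _ = Y.trace.re := by rw [Matrix.one_mul]
  have hQZ : (Q * ((R + η • 1) * Y⁻¹ * (R + η • 1))).trace.re =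
      (Y⁻¹ * ((R + η • 1) * Q * (R + η • 1))).trace.re := by
    rw [trace_mul_comm Y⁻¹, ← Matrix.mul_assoc, ← Matrix.mul_assoc,
      trace_mul_comm _ (R + η • 1)]
    simp only [Matrix.mul_assoc]
  linarith

lemma PosSemidef.exists_posDef_re_trace_add_le {B : Matrix n n ℂ} (hB : B.PosSemidef) {ε : ℝ}
    (hε : 0 < ε) :
    ∃ Y : Matrix n n ℂ, Y.PosDef ∧ Y.trace.re + (Y⁻¹ * (B * B)).trace.re ≤ 2 * B.trace.re + ε := by
  set t := ε / (Fintype.card n + 1)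
  have ht : 0 < t := by positivity
  have htn : t * Fintype.card n ≤ ε := by
    rw [div_mul_eq_mul_div, div_le_iff₀ (by positivity)]
    nlinarith
  refine ⟨B + t • 1, hB.posDef_add_smul_one ht, ?_⟩
  have htr : (B + t • 1).trace.re = B.trace.re + t * Fintype.card n := by
    simp [trace_add, trace_smul]
  linarith [hB.re_trace_inv_add_smul_one_mul_sq_le ht]

end Variational

end Matrix

section Fidelity

variable {d : ℕ}

lemma msqrt_eq_sqrt {A : Matrix (Fin d) (Fin d) ℂ} (hA : A.PosSemidef) :
    msqrt A = CFC.sqrt A := by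
  rw [msqrt, dif_pos hA, CFC.sqrt_eq_real_sqrt A hA.nonneg, cfcₙ_eq_cfc, hA.1.cfc_eq,
    IsHermitian.cfc, Unitary.conjStarAlgAut_apply]
  rfl

lemma fid_eq_re_trace_sqrt {ρ σ : Matrix (Fin d) (Fin d) ℂ} (hρ : ρ.PosSemidef)
    (hσ : σ.PosSemidef) :
    fid ρ σ = (CFC.sqrt (CFC.sqrt ρ * σ * CFC.sqrt ρ)).trace.re := by
  rw [fid, msqrt_eq_sqrt hρ, msqrt_eq_sqrt (hσ.sqrt_mul_mul_sqrt ρ)]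

lemma exists_posDef_re_trace_le_two_mul_fid {P Q : Matrix (Fin d) (Fin d) ℂ}
    (hP : P.PosSemidef) (hQ : Q.PosSemidef) {ε : ℝ} (hε : 0 < ε) :
    ∃ Z : Matrix (Fin d) (Fin d) ℂ, Z.PosDef ∧
      (P * Z⁻¹).trace.re + (Q * Z).trace.re ≤ 2 * fid P Q + ε := by
  have hPQP := hQ.sqrt_mul_mul_sqrt P
  obtain ⟨Y, hY, hYle⟩ :=
    (posSemidef_sqrt (CFC.sqrt P * Q * CFC.sqrt P)).exists_posDef_re_trace_add_le (half_pos hε)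
  obtain ⟨Z, hZ, hZle⟩ := exists_posDef_re_trace_le_of_posDef (Q := Q) hP hY (half_pos hε)
  rw [CFC.sqrt_mul_sqrt_self _ hPQP.nonneg] at hYle
  refine ⟨Z, hZ, ?_⟩
  rw [fid_eq_re_trace_sqrt hP hQ]
  linarith

lemma two_mul_sqrt_mul_fid_le {ρ σ Z : Matrix (Fin d) (Fin d) ℂ} (hρ : ρ.PosSemidef)
    (hσ : σ.PosSemidef) (hZ : Z.PosDef) {p q : ℝ} (hp : 0 ≤ p) (hq : 0 ≤ q) :
    2 * √(p * q) * fid ρ σ ≤ p * (ρ * Z⁻¹).trace.re + q * (σ * Z).trace.re := by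
  rw [fid_eq_re_trace_sqrt hρ hσ]
  set A := CFC.sqrt ρ
  set B := CFC.sqrt σ
  have hA : A.IsHermitian := (posSemidef_sqrt ρ).isHermitian
  have hB : B.IsHermitian := (posSemidef_sqrt σ).isHermitian
  have hAA : A * A = ρ := CFC.sqrt_mul_sqrt_self ρ hρ.nonneg
  have hBB : B * B = σ := CFC.sqrt_mul_sqrt_self σ hσ.nonneg
  set M := CFC.sqrt (A * σ * A)
  have hM : M.PosSemidef := posSemidef_sqrt _
  have hMM : M * M = A * σ * A := CFC.sqrt_mul_sqrt_self _ (hσ.sqrt_mul_mul_sqrt ρ).nonneg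
  have key : ∀ δ > 0, 2 * √(p * q) * (M.trace.re - δ * Fintype.card (Fin d)) ≤
      p * (ρ * Z⁻¹).trace.re + q * (σ * Z).trace.re := by
    intro δ hδ
    have hMδinv := (hM.posDef_add_smul_one hδ).inv.isHermitian
    set C := (M + δ • 1)⁻¹ * A * B
    have hC : C * Cᴴ ≤ 1 := by
      have : C * Cᴴ = (M + δ • 1)⁻¹ * (M * M) * (M + δ • 1)⁻¹ := by
        rw [hMM, ← hBB]
        simp only [C, conjTranspose_mul, hA.eq, hB.eq, hMδinv.eq, Matrix.mul_assoc]
      rw [this]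
      exact hM.inv_add_smul_one_mul_sq_mul_inv_le_one hδ
    have hCBA : C * B * A = (M + δ • 1)⁻¹ * (M * M) := by
      rw [hMM, ← hBB]
      simp only [C, Matrix.mul_assoc]
    have := two_mul_re_trace_le_of_mul_conjTranspose_le_one (A := A) (B := B) hC hZ √p √q
    rw [hCBA, hA.eq, hAA, hB.eq, hBB, Real.sq_sqrt hp, Real.sq_sqrt hq, ← Real.sqrt_mul hp] at this
    exact (mul_le_mul_of_nonneg_left (hM.sub_le_re_trace_inv_add_smul_one_mul_sq hδ)
      (by positivity)).trans this
  exact le_of_tendsto ((Continuous.tendsto' (by fun_prop) 0 _ (by simp)).mono_left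
    nhdsWithin_le_nhds) (eventually_nhdsWithin_of_forall (s := Set.Ioi 0) key)

end Fidelity

theorem strong_joint_concavity_of_fidelity_general
    (d n : ℕ)
    (ρ σ : Fin n → Matrix (Fin d) (Fin d) ℂ)
    (hρ : ∀ i, (ρ i).PosSemidef) (hσ : ∀ i, (σ i).PosSemidef)
    (p q : Fin n → ℝ)
    (hp : ∀ i, 0 ≤ p i) (hq : ∀ i, 0 ≤ q i) :
    ∑ i, Real.sqrt (p i * q i) * fid (ρ i) (σ i) ≤
      fid (∑ i, p i • ρ i) (∑ i, q i • σ i) := by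
  have hP : (∑ i, p i • ρ i).PosSemidef := posSemidef_sum _ fun i _ ↦ (hρ i).smul (hp i)
  have hQ : (∑ i, q i • σ i).PosSemidef := posSemidef_sum _ fun i _ ↦ (hσ i).smul (hq i)
  refine le_of_forall_pos_le_add fun ε hε ↦ ?_
  obtain ⟨Z, hZ, hZle⟩ := exists_posDef_re_trace_le_two_mul_fid hP hQ (by positivity : 0 < 2 * ε)
  have hsum : 2 * ∑ i, √(p i * q i) * fid (ρ i) (σ i) ≤
      ((∑ i, p i • ρ i) * Z⁻¹).trace.re + ((∑ i, q i • σ i) * Z).trace.re :=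
    calc 2 * ∑ i, √(p i * q i) * fid (ρ i) (σ i)
        = ∑ i, 2 * √(p i * q i) * fid (ρ i) (σ i) := by
          rw [Finset.mul_sum]; simp only [mul_assoc]
      _ ≤ ∑ i, (p i * (ρ i * Z⁻¹).trace.re + q i * (σ i * Z).trace.re) :=
          Finset.sum_le_sum fun i _ ↦ two_mul_sqrt_mul_fid_le (hρ i) (hσ i) hZ (hp i) (hq i)
      _ = ((∑ i, p i • ρ i) * Z⁻¹).trace.re + ((∑ i, q i • σ i) * Z).trace.re := by
          simp [Finset.sum_mul, trace_sum, Finset.sum_add_distrib, trace_smul]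
  linarith

/-- Strong joint concavity of fidelity:
F(∑ p_i ρ_i, ∑ q_i σ_i) ≥ ∑ √(p_i q_i) F(ρ_i, σ_i). -/
theorem strong_joint_concavity_of_fidelity
    (d n : ℕ) (hd : 1 ≤ d) (hn : 1 ≤ n)
    (ρ σ : Fin n → Matrix (Fin d) (Fin d) ℂ)
    (hρ : ∀ i, (ρ i).PosSemidef) (hσ : ∀ i, (σ i).PosSemidef)
    (hρtr : ∀ i, (ρ i).trace = 1) (hσtr : ∀ i, (σ i).trace = 1)
    (p q : Fin n → ℝ)
    (hp : ∀ i, 0 ≤ p i) (hq : ∀ i, 0 ≤ q i)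
    (hps : ∑ i, p i = 1) (hqs : ∑ i, q i = 1) :
    ∑ i, Real.sqrt (p i * q i) * fid (ρ i) (σ i) ≤
      fid (∑ i, p i • ρ i) (∑ i, q i • σ i) :=
  strong_joint_concavity_of_fidelity_general d n ρ σ hρ hσ p q hp hq
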